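/- arXiv:0710.4047 — 7 statements merged into one kernel-verified Lean document; each statement's English description precedes it below -/
import Mathlib

section
/- The integral of x·cot(x) from 0 to π/2 equals (π/2)·log 2. -/
/-!
Integrate by parts against `x ↦ x * log (sin x)`, whose derivative is `log (sin x) + x * cot x`.
The boundary terms vanish (`sin (π/2) = 1`, and `x * log (sin x) → 0` at `0`), so the integral
is `-∫₀^{π/2} log (sin x) = (π/2) * log 2`. Near `0` both `x * log (sin x)` and `x * cot x` are
controlled by writing `sin x = x * sinc x` with `sinc` continuous and positive on `(-π, π)`.
-/

open Real Set MeasureTheory intervalIntegral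

namespace Real

lemma sinc_ne_zero_of_mem_Ioo {x : ℝ} (hx : x ∈ Ioo (-π) π) : sinc x ≠ 0 := by
  rcases eq_or_ne x 0 with rfl | hx0
  · simp
  · rw [sinc_of_ne_zero hx0]
    exact div_ne_zero (mt (sin_eq_zero_iff_of_lt_of_lt hx.1 hx.2).mp hx0) hx0

lemma mul_log_sin_eq {x : ℝ} (hx : sinc x ≠ 0) :
    x * log (sin x) = x * log x + x * log (sinc x) := by
  rcases eq_or_ne x 0 with rfl | hx0
  · simp
  · rw [← mul_add, ← log_mul hx0 hx, sinc_of_ne_zero hx0, mul_div_cancel₀ _ hx0]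

lemma mul_cot_eq_cos_div_sinc {x : ℝ} (hx : x ≠ 0) :
    x * (cos x / sin x) = cos x / sinc x := by
  rw [sinc_of_ne_zero hx, div_div_eq_mul_div, mul_div_assoc', mul_comm]

lemma continuousOn_mul_log_sin :
    ContinuousOn (fun x => x * log (sin x)) (Ioo (-π) π) :=
  (continuous_mul_log.continuousOn.add (continuousOn_id.mul
    (continuous_sinc.continuousOn.log fun _ hx => sinc_ne_zero_of_mem_Ioo hx))).congr
    fun _ hx => mul_log_sin_eq (sinc_ne_zero_of_mem_Ioo hx)

lemma intervalIntegrable_mul_cot {a b : ℝ} (ha : a ∈ Ioo (-π) π) (hb : b ∈ Ioo (-π) π) :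
    IntervalIntegrable (fun x => x * (cos x / sin x)) volume a b := by
  have hcont : ContinuousOn (fun x => cos x / sinc x) (uIcc a b) :=
    continuous_cos.continuousOn.div continuous_sinc.continuousOn
      fun _ hx => sinc_ne_zero_of_mem_Ioo (ordConnected_Ioo.uIcc_subset ha hb hx)
  refine hcont.intervalIntegrable.congr_ae ?_
  filter_upwards [Measure.ae_ne _ 0] with x hx
  exact (mul_cot_eq_cos_div_sinc hx).symm

lemma hasDerivAt_mul_log_sin {x : ℝ} (hx : sin x ≠ 0) :
    HasDerivAt (fun y => y * log (sin y)) (log (sin x) + x * (cos x / sin x)) x :=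
  ((hasDerivAt_id' x).mul ((hasDerivAt_sin x).log hx)).congr_deriv (by simp)

lemma integral_mul_cot {b : ℝ} (hb₀ : 0 ≤ b) (hb : b < π) :
    ∫ x in 0..b, x * (cos x / sin x) = b * log (sin b) - ∫ x in 0..b, log (sin x) := by
  have hmem : Icc 0 b ⊆ Ioo (-π) π := fun x hx => ⟨by linarith [hx.1, pi_pos], hx.2.trans_lt hb⟩
  have hlog : IntervalIntegrable (fun x => log (sin x)) volume 0 b := intervalIntegrable_log_sin
  have hint := intervalIntegrable_mul_cot (hmem ⟨le_rfl, hb₀⟩) (hmem ⟨hb₀, le_rfl⟩)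
  have hftc := integral_eq_sub_of_hasDerivAt_of_le hb₀ (continuousOn_mul_log_sin.mono hmem)
    (fun x hx => hasDerivAt_mul_log_sin (sin_pos_of_pos_of_lt_pi hx.1 (hx.2.trans hb)).ne')
    (hlog.add hint)
  rw [integral_add hlog hint] at hftc
  simp only [zero_mul, sub_zero] at hftc
  linarith

end Real

theorem integral_x_cot : ∫ x in (0:ℝ)..(π/2), x * (Real.cos x / Real.sin x)
    = (π/2) * Real.log 2 := by
  rw [integral_mul_cot (by positivity) (by linarith [pi_pos]), sin_pi_div_two, log_one,
    integral_log_sin_zero_pi_div_two]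
  ring
end

section
/- Euler's 1772 integral: ∫₀^{π/2} x · log(sin x) dx = (7/16)ζ(3) − (π²/8)·log 2. -/
/-!
For `|r| < 1`, the real part of `-log (1 - r e^{iθ}) = ∑ rⁿ e^{inθ} / n` is
`-½ log (1 - 2r cos θ + r²) = ∑ rⁿ cos (nθ) / n`, with geometric convergence. Taking `θ = 2t`,
multiplying by `t` and integrating termwise over `[0, π/2]` gives
`∑ ((-1)ⁿ - 1) / (4n³) rⁿ`. Now let `r → 1⁻`. The series tends to
`∑ ((-1)ⁿ - 1) / (4n³) = -(7/16) ζ(3)` by Abel's theorem (only odd `n` contribute). The integrand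
tends to `-t (log 2 + log (sin t))`, because `1 - 2r cos 2t + r² = (1 - r)² + 4r sin² t`, and for
`r ≥ 1/2` this lies between `2 sin² t` and `4`, so dominated convergence applies with the
integrable majorant `log 4 + 2 |log (sin t)|`.
-/

open Real Filter MeasureTheory Set Topology

lemma hasSum_one_sub_neg_one_pow_div_pow {k : ℕ} (hk : 1 < k) :
    HasSum (fun n : ℕ => (1 - (-1 : ℝ) ^ n) / (n : ℝ) ^ k)
      (2 * (1 - (2 ^ k)⁻¹) * ∑' n : ℕ, 1 / (n : ℝ) ^ k) := by
  have hS := (Real.summable_one_div_nat_pow.mpr hk).hasSum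
  have heven : HasSum (fun n : ℕ => (1 + (-1 : ℝ) ^ n) / (n : ℝ) ^ k)
      (2 * (2 ^ k)⁻¹ * ∑' n : ℕ, 1 / (n : ℝ) ^ k) := by
    rw [← (mul_right_injective₀ two_ne_zero).hasSum_iff]
    · refine (hS.mul_left (2 * (2 ^ k)⁻¹)).congr_fun fun m => ?_
      rw [Function.comp_apply, pow_mul, neg_one_sq, one_pow, Nat.cast_mul, Nat.cast_ofNat,
        mul_pow]
      ring
    · intro n hn
      have : Odd n := by simpa [← even_iff_two_dvd, Nat.not_even_iff_odd] using hn
      simp [this.neg_one_pow]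
  rw [show 2 * (1 - (2 ^ k)⁻¹) * ∑' n : ℕ, 1 / (n : ℝ) ^ k
      = 2 * ∑' n : ℕ, 1 / (n : ℝ) ^ k - 2 * (2 ^ k)⁻¹ * ∑' n : ℕ, 1 / (n : ℝ) ^ k by ring]
  exact ((hS.mul_left 2).sub heven).congr_fun fun n => by ring

lemma hasSum_neg_one_pow_sub_one_div_four_mul_cube :
    HasSum (fun n : ℕ => ((-1 : ℝ) ^ n - 1) / (4 * n ^ 3))
      (-(7 / 16) * ∑' n : ℕ, 1 / (n : ℝ) ^ 3) := by
  rw [show -(7 / 16) * ∑' n : ℕ, 1 / (n : ℝ) ^ 3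
      = -(1 / 4) * (2 * (1 - (2 ^ 3)⁻¹) * ∑' n : ℕ, 1 / (n : ℝ) ^ 3) by ring]
  exact ((hasSum_one_sub_neg_one_pow_div_pow (by norm_num)).mul_left _).congr_fun
    fun n => by ring

lemma riemannZeta_natCast_eq_ofReal_tsum {k : ℕ} (hk : 1 < k) :
    riemannZeta k = ((∑' n : ℕ, 1 / (n : ℝ) ^ k : ℝ) : ℂ) := by
  rw [zeta_nat_eq_tsum_of_gt_one hk, Complex.ofReal_tsum]
  push_cast
  rfl

/-- The `n = 0` term is `1 / 0 = 0`, matching the `n = 0` term of the logarithm series. -/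
lemma hasSum_pow_mul_cos_div {r : ℝ} (hr : |r| < 1) (θ : ℝ) :
    HasSum (fun n : ℕ => r ^ n * cos (n * θ) / n) (-(log (1 - 2 * r * cos θ + r ^ 2) / 2)) := by
  set z : ℂ := r * Complex.exp (θ * Complex.I)
  have hz : ‖z‖ < 1 := by simpa [z, Complex.norm_exp_ofReal_mul_I] using hr
  have hre (n : ℕ) : (z ^ n / n).re = r ^ n * cos (n * θ) / n := by
    rw [mul_pow, ← Complex.exp_nat_mul, ← Complex.ofReal_pow, Complex.div_natCast_re,
      Complex.re_ofReal_mul, ← mul_assoc, ← Complex.ofReal_natCast, ← Complex.ofReal_mul,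
      Complex.exp_ofReal_mul_I_re]
  have hnormSq : Complex.normSq (1 - z) = 1 - 2 * r * cos θ + r ^ 2 := by
    have hre1 : (1 - z).re = 1 - r * cos θ := by simp [z, Complex.exp_ofReal_mul_I_re]
    have him1 : (1 - z).im = -(r * sin θ) := by simp [z, Complex.exp_ofReal_mul_I_im]
    rw [Complex.normSq_apply, hre1, him1]
    linear_combination r ^ 2 * sin_sq_add_cos_sq θ
  have hlog : (-Complex.log (1 - z)).re = -(log (1 - 2 * r * cos θ + r ^ 2) / 2) := by
    rw [Complex.neg_re, Complex.log_re, Complex.norm_def, hnormSq,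
      Real.log_sqrt (hnormSq ▸ Complex.normSq_nonneg _)]
  simpa only [hre, hlog] using Complex.hasSum_re (Complex.hasSum_taylorSeries_neg_log hz)

lemma integral_mul_cos_mul {c : ℝ} (hc : c ≠ 0) (a b : ℝ) :
    ∫ t in a..b, t * cos (c * t) =
      (b * sin (c * b) / c + cos (c * b) / c ^ 2) - (a * sin (c * a) / c + cos (c * a) / c ^ 2) := by
  refine intervalIntegral.integral_eq_sub_of_hasDerivAt
    (f := fun t => t * sin (c * t) / c + cos (c * t) / c ^ 2) (fun t _ => ?_)
    ((by fun_prop : Continuous fun t => t * cos (c * t)).intervalIntegrable _ _)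
  have hsin := ((hasDerivAt_id t).const_mul c).sin
  have hcos := ((hasDerivAt_id t).const_mul c).cos
  refine ((((hasDerivAt_id t).mul hsin).div_const c).add (hcos.div_const (c ^ 2))).congr_deriv ?_
  field_simp
  simp only [id]
  ring

lemma integral_mul_cos_nat_mul_two_mul {n : ℕ} (hn : n ≠ 0) :
    ∫ t in (0 : ℝ)..π / 2, t * cos (n * (2 * t)) = ((-1) ^ n - 1) / (4 * n ^ 2) := by
  have hc : (2 * n : ℝ) ≠ 0 := by positivity
  simp_rw [← mul_assoc, mul_comm (n : ℝ) 2, integral_mul_cos_mul hc,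
    show 2 * (n : ℝ) * (π / 2) = n * π by ring, sin_nat_mul_pi, cos_nat_mul_pi]
  field_simp
  simp only [mul_zero, zero_mul, zero_add, sin_zero, cos_zero]
  ring

lemma hasSum_integral_mul_log {r : ℝ} (hr : |r| < 1) :
    HasSum (fun n : ℕ => ((-1) ^ n - 1) / (4 * n ^ 3) * r ^ n)
      (∫ t in (0 : ℝ)..π / 2, t * -(log ((1 - r) ^ 2 + 4 * r * sin t ^ 2) / 2)) := by
  have hterm (n : ℕ) : ∫ t in (0 : ℝ)..π / 2, t * (r ^ n * cos (n * (2 * t)) / n)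
      = ((-1) ^ n - 1) / (4 * n ^ 3) * r ^ n := by
    rcases eq_or_ne n 0 with rfl | hn
    · simp
    have hfun : (fun t : ℝ => t * (r ^ n * cos (n * (2 * t)) / n))
        = fun t => r ^ n / n * (t * cos (n * (2 * t))) := by
      funext t; ring
    rw [hfun, intervalIntegral.integral_const_mul, integral_mul_cos_nat_mul_two_mul hn]
    field_simp
  have hQ (t : ℝ) : 1 - 2 * r * cos (2 * t) + r ^ 2 = (1 - r) ^ 2 + 4 * r * sin t ^ 2 := by
    rw [cos_two_mul, cos_sq']
    ring
  have hr0 : 0 ≤ |r| := abs_nonneg r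
  refine (intervalIntegral.hasSum_integral_of_dominated_convergence (fun n _ => 2 * |r| ^ n)
    (fun n => by fun_prop) (fun n => .of_forall fun t ht => ?_)
    (.of_forall fun t _ => (summable_geometric_of_lt_one hr0 hr).mul_left 2)
    intervalIntegrable_const (.of_forall fun t _ => ?_)).congr_fun fun n => (hterm n).symm
  · rw [uIoc_of_le (by positivity)] at ht
    rw [norm_mul, norm_div, norm_mul, norm_pow, Real.norm_of_nonneg ht.1.le, RCLike.norm_natCast]
    have hcos : ‖cos (n * (2 * t))‖ ≤ 1 := abs_cos_le_one _
    calc t * (|r| ^ n * ‖cos (n * (2 * t))‖ / n) ≤ 2 * (|r| ^ n * 1) := by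
          gcongr
          · linarith [ht.2, pi_le_four]
          · exact (div_nat_le_self_of_nonnneg (by positivity) n).trans (by gcongr)
      _ = 2 * |r| ^ n := by ring
  · simpa only [hQ] using (hasSum_pow_mul_cos_div hr (2 * t)).mul_left t

lemma tendsto_integral_mul_log_nhdsLT_one :
    Tendsto (fun r => ∫ t in (0 : ℝ)..π / 2, t * -(log ((1 - r) ^ 2 + 4 * r * sin t ^ 2) / 2))
      (𝓝[<] 1) (𝓝 (∫ t in (0 : ℝ)..π / 2, t * -(log 2 + log (sin t)))) := by
  refine intervalIntegral.tendsto_integral_filter_of_dominated_convergence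
    (fun t => log 4 + 2 * |log (sin t)|) (.of_forall fun r => by fun_prop) ?_
    (intervalIntegrable_const.add (intervalIntegrable_log_sin.abs.const_mul 2))
    (.of_forall fun t ht => ?_)
  · filter_upwards [Ioo_mem_nhdsLT (by norm_num : (1 / 2 : ℝ) < 1)] with r ⟨hr1, hr2⟩
    refine .of_forall fun t ht => ?_
    rw [uIoc_of_le (by positivity)] at ht
    have hsin : 0 < sin t := sin_pos_of_pos_of_lt_pi ht.1 (by linarith [ht.2, pi_pos])
    set Q := (1 - r) ^ 2 + 4 * r * sin t ^ 2
    have hQ_le : Q ≤ 4 := by nlinarith [sin_sq_le_one t]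
    have hQ_ge : 2 * sin t ^ 2 ≤ Q := by nlinarith
    have hlog_le : log Q ≤ log 4 := log_le_log (by positivity) hQ_le
    have hlog_ge : log 2 + 2 * log (sin t) ≤ log Q := by
      calc log 2 + 2 * log (sin t) = log (2 * sin t ^ 2) := by
            rw [log_mul two_ne_zero (by positivity), log_pow, Nat.cast_ofNat]
        _ ≤ log Q := log_le_log (by positivity) hQ_ge
    have hlog_abs : |log Q| ≤ log 4 + 2 * |log (sin t)| := by
      rw [abs_le]
      constructor <;> linarith [neg_abs_le (log (sin t)), le_abs_self (log (sin t)),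
        log_nonneg (by norm_num : (1 : ℝ) ≤ 2), log_nonneg (by norm_num : (1 : ℝ) ≤ 4)]
    rw [norm_mul, norm_neg, norm_div, Real.norm_of_nonneg ht.1.le, Real.norm_eq_abs,
      Real.norm_two]
    calc t * (|log Q| / 2) ≤ 2 * (|log Q| / 2) := by gcongr; linarith [ht.2, pi_le_four]
      _ ≤ log 4 + 2 * |log (sin t)| := by linarith
  · rw [uIoc_of_le (by positivity)] at ht
    have hsin : 0 < sin t := sin_pos_of_pos_of_lt_pi ht.1 (by linarith [ht.2, pi_pos])
    have hQ : Tendsto (fun r : ℝ => (1 - r) ^ 2 + 4 * r * sin t ^ 2) (𝓝[<] 1)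
        (𝓝 (2 ^ 2 * sin t ^ 2)) :=
      ((by fun_prop : Continuous fun r : ℝ => (1 - r) ^ 2 + 4 * r * sin t ^ 2).tendsto' 1 _
        (by ring)).mono_left nhdsWithin_le_nhds
    convert ((hQ.log (by positivity)).div_const 2).neg.const_mul t using 2
    rw [log_mul (by positivity) (by positivity), log_pow, log_pow]
    ring

lemma integral_mul_neg_log_two_add_log_sin :
    ∫ t in (0 : ℝ)..π / 2, t * -(log 2 + log (sin t))
      = -(π ^ 2 / 8 * log 2) - ∫ t in (0 : ℝ)..π / 2, t * log (sin t) := by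
  have hint : IntervalIntegrable (fun t => t * log (sin t)) volume 0 (π / 2) :=
    intervalIntegrable_log_sin.continuousOn_mul continuousOn_id
  calc ∫ t in (0 : ℝ)..π / 2, t * -(log 2 + log (sin t))
      = ∫ t in (0 : ℝ)..π / 2, (-log 2 * t - t * log (sin t)) :=
        intervalIntegral.integral_congr fun t _ => by ring
    _ = _ := by
        rw [intervalIntegral.integral_sub
          ((by fun_prop : Continuous fun t : ℝ => -log 2 * t).intervalIntegrable _ _) hint,
          intervalIntegral.integral_const_mul, integral_id]
        ring

theorem euler_1772_integral :
    ((∫ x in (0:ℝ)..(π/2), x * Real.log (Real.sin x) : ℝ) : ℂ)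
      = (7/16) * riemannZeta 3 - ((π : ℂ)^2/8) * (Real.log 2 : ℂ) := by
  set S := ∑' n : ℕ, 1 / (n : ℝ) ^ 3
  have habel := Real.tendsto_tsum_powerSeries_nhdsWithin_lt
    hasSum_neg_one_pow_sub_one_div_four_mul_cube.tendsto_sum_nat
  have hlim : -(7 / 16) * S = ∫ t in (0 : ℝ)..π / 2, t * -(log 2 + log (sin t)) := by
    refine tendsto_nhds_unique (habel.congr' ?_) tendsto_integral_mul_log_nhdsLT_one
    filter_upwards [Ioo_mem_nhdsLT (by norm_num : (-1 : ℝ) < 1)] with r hr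
    exact (hasSum_integral_mul_log (abs_lt.2 hr)).tsum_eq
  have hI : ∫ t in (0 : ℝ)..π / 2, t * log (sin t) = 7 / 16 * S - π ^ 2 / 8 * log 2 := by
    linear_combination hlim + integral_mul_neg_log_two_add_log_sin
  rw [show (3 : ℂ) = (3 : ℕ) by norm_num, riemannZeta_natCast_eq_ofReal_tsum (by norm_num), hI]
  push_cast [S]
  ring
end

section
/- The integral ∫₀^{π/2} x / sin x dx equals 2G, where G is Catalan's constant. -/
/-!
The substitution `x = 2 arctan t`, for which `sin x = 2t / (1 + t²)` and `dx = 2 dt / (1 + t²)`,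
turns `∫₀^{π/2} x / sin x dx` into `2 ∫₀¹ arctan t / t dt`. Expanding
`arctan t / t = ∑ (-1)ⁿ t²ⁿ / (2n + 1)` and integrating termwise gives `∑ (-1)ⁿ / (2n + 1)²`; the
termwise integration is legitimate because `∑ ∫₀¹ t²ⁿ / (2n + 1) dt = ∑ 1 / (2n + 1)²` converges,
so no uniform convergence of the arctangent series up to `t = 1` is needed.
-/

open Real Set MeasureTheory

lemma sin_two_mul_arctan (t : ℝ) : sin (2 * arctan t) = 2 * t / (1 + t ^ 2) := by
  have h : (0 : ℝ) < 1 + t ^ 2 := by positivity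
  rw [sin_two_mul, sin_arctan, cos_arctan]
  field_simp
  rw [sq_sqrt h.le]

lemma integral_id_div_sin_two_mul_arctan (b : ℝ) :
    ∫ x in (0 : ℝ)..2 * arctan b, x / sin x = 2 * ∫ t in (0 : ℝ)..b, arctan t / t := by
  have hsub := intervalIntegral.integral_comp_mul_deriv_of_deriv_nonneg (g := fun x => x / sin x)
    (f := fun t => 2 * arctan t) (f' := fun t => 2 / (1 + t ^ 2)) (a := 0) (b := b)
    (by fun_prop) (fun t _ => ((hasDerivAt_arctan t).const_mul 2).congr_deriv (by ring))
    (fun t _ => by positivity)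
  simp only [arctan_zero, mul_zero] at hsub
  rw [← hsub, ← intervalIntegral.integral_const_mul]
  congr 1 with t
  have h : (0 : ℝ) < 1 + t ^ 2 := by positivity
  -- at `t = 0` both sides vanish, by the convention `x / 0 = 0`
  simp only [Function.comp_apply, sin_two_mul_arctan]
  field_simp

lemma hasSum_arctan_div_self {t : ℝ} (ht : ‖t‖ < 1) (ht0 : t ≠ 0) :
    HasSum (fun n : ℕ => (-1) ^ n * t ^ (2 * n) / ↑(2 * n + 1)) (arctan t / t) := by
  have hterm : (fun n : ℕ => (-1) ^ n * t ^ (2 * n + 1) / ↑(2 * n + 1) / t) =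
      fun n : ℕ => (-1) ^ n * t ^ (2 * n) / ↑(2 * n + 1) := by
    funext n
    rw [pow_succ]
    field_simp
  simpa only [hterm] using (hasSum_arctan ht).div_const t

lemma integral_pow_two_mul_div (n : ℕ) (x : ℝ) :
    ∫ t in (0 : ℝ)..x, t ^ (2 * n) / ↑(2 * n + 1) = x ^ (2 * n + 1) / ↑(2 * n + 1) ^ 2 := by
  rw [intervalIntegral.integral_div, integral_pow, zero_pow (Nat.succ_ne_zero _), sub_zero]
  push_cast
  field_simp

lemma summable_pow_two_mul_add_one_div_sq {x : ℝ} (hx0 : 0 ≤ x) (hx1 : x ≤ 1) :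
    Summable fun n : ℕ => x ^ (2 * n + 1) / (↑(2 * n + 1) : ℝ) ^ 2 := by
  have hodd : Summable fun n : ℕ => 1 / (↑(2 * n + 1) : ℝ) ^ 2 :=
    (summable_one_div_nat_pow.mpr one_lt_two).comp_injective
      (fun m n h => by simpa using h)
  refine hodd.of_nonneg_of_le (fun n => by positivity) fun n => ?_
  gcongr
  exact pow_le_one₀ hx0 hx1

theorem hasSum_integral_arctan_div_self {x : ℝ} (hx0 : 0 ≤ x) (hx1 : x ≤ 1) :
    HasSum (fun n : ℕ => (-1) ^ n * x ^ (2 * n + 1) / (↑(2 * n + 1) : ℝ) ^ 2)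
      (∫ t in (0 : ℝ)..x, arctan t / t) := by
  set F : ℕ → ℝ → ℝ := fun n t => (-1) ^ n * t ^ (2 * n) / ↑(2 * n + 1)
  have interval_eq_Ioo (f : ℝ → ℝ) : ∫ t in (0 : ℝ)..x, f t = ∫ t in Ioo 0 x, f t := by
    rw [intervalIntegral.integral_of_le hx0, integral_Ioc_eq_integral_Ioo]
  have hF_int (n : ℕ) : Integrable (F n) (volume.restrict (Ioo 0 x)) :=
    (by fun_prop : Continuous (F n)).integrableOn_Icc.mono_set Ioo_subset_Icc_self
  have hF_norm (n : ℕ) : ∫ t in Ioo 0 x, ‖F n t‖ = x ^ (2 * n + 1) / (↑(2 * n + 1) : ℝ) ^ 2 := by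
    rw [← integral_pow_two_mul_div, interval_eq_Ioo]
    refine setIntegral_congr_fun measurableSet_Ioo fun t ht => ?_
    simp [F, abs_of_pos ht.1, abs_of_pos (by positivity : (0 : ℝ) < 2 * n + 1)]
  have hF (n : ℕ) : ∫ t in Ioo 0 x, F n t = (-1) ^ n * x ^ (2 * n + 1) / (↑(2 * n + 1) : ℝ) ^ 2 := by
    rw [← interval_eq_Ioo, mul_div_assoc, ← integral_pow_two_mul_div,
      ← intervalIntegral.integral_const_mul]
    simp only [F, mul_div_assoc]
  have hsum : ∫ t in Ioo 0 x, ∑' n, F n t = ∫ t in (0 : ℝ)..x, arctan t / t := by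
    rw [interval_eq_Ioo]
    refine setIntegral_congr_fun measurableSet_Ioo fun t ht => ?_
    refine (hasSum_arctan_div_self ?_ ht.1.ne').tsum_eq
    rw [norm_of_nonneg ht.1.le]
    exact ht.2.trans_le hx1
  have := hasSum_integral_of_summable_integral_norm hF_int
    (by simpa only [hF_norm] using summable_pow_two_mul_add_one_div_sq hx0 hx1)
  simpa only [hF, hsum] using this

theorem integral_x_div_sin :
    ∫ x in (0:ℝ)..(π/2), x / Real.sin x
      = 2 * ∑' n : ℕ, (-1 : ℝ)^n / (2*(n:ℝ)+1)^2 := by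
  have hsub := integral_id_div_sin_two_mul_arctan 1
  rw [arctan_one, show 2 * (π / 4) = π / 2 by ring] at hsub
  rw [hsub, (hasSum_integral_arctan_div_self zero_le_one le_rfl).tsum_eq.symm]
  simp
end

section
/- The integral ∫₀^{π/2} x² / sin x dx equals 2πG − (7/2)ζ(3). -/
/-!
From the telescoping identity `1 - cos (2Nx) = 2 sin x ∑_{k<N} sin ((2k+1)x)`,
`x² / sin x = 2 ∑_{k<N} x² sin ((2k+1)x) + (x² / sin x) cos (2Nx)`. Since `x² / sin x` is bounded
on `(0, π/2]`, the Riemann–Lebesgue lemma kills the integral of the last term as `N → ∞`.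
Integrating by parts, `∫₀^{π/2} x² sin ((2k+1)x) dx = π (-1)^k / (2k+1)² - 2 / (2k+1)³`, and the
odd part of `ζ(3)` is `∑ 1 / (2k+1)³ = (7/8) ζ(3)`.
-/

open Real Filter Topology MeasureTheory

theorem tendsto_integral_mul_cos_atTop {f : ℝ → ℝ} (hf : Integrable f) :
    Tendsto (fun t : ℝ => ∫ x, f x * cos (t * x)) atTop (𝓝 0) := by
  -- with `w = -t / (2π)`, the Fourier character `𝐞 (-(x * w))` is `exp (i t x)`
  have hw : Tendsto (fun t : ℝ => -t / (2 * π)) atTop (cocompact ℝ) :=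
    (tendsto_neg_atTop_atBot.atBot_div_const (by positivity)).mono_right
      (by rw [cocompact_eq_atBot_atTop]; exact le_sup_left)
  have key := (Complex.continuous_re.tendsto 0).comp
    ((Real.tendsto_integral_exp_smul_cocompact fun x => (f x : ℂ)).comp hw)
  rw [Complex.zero_re] at key
  refine key.congr fun t => ?_
  have hint : Integrable fun x : ℝ => fourierChar (-(x * (-t / (2 * π)))) • (f x : ℂ) :=
    (Real.fourierIntegral_convergent_iff' (ContinuousLinearMap.mul ℝ ℝ) _).2 hf.ofReal
  rw [Function.comp_apply, Function.comp_apply, ← RCLike.re_to_complex, ← integral_re hint]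
  congr 1 with x
  rw [Circle.smul_def, Real.fourierChar_apply, smul_eq_mul, RCLike.re_to_complex,
    Complex.re_mul_ofReal, Complex.exp_ofReal_mul_I_re]
  field_simp

theorem tendsto_setIntegral_mul_cos_atTop {f : ℝ → ℝ} {s : Set ℝ} (hs : MeasurableSet s)
    (hf : IntegrableOn f s) :
    Tendsto (fun t : ℝ => ∫ x in s, f x * cos (t * x)) atTop (𝓝 0) := by
  simpa only [← integral_indicator hs, Set.indicator_mul_left] using
    tendsto_integral_mul_cos_atTop ((integrable_indicator_iff hs).2 hf)

theorem intervalIntegral.tendsto_integral_mul_cos_atTop {f : ℝ → ℝ} {a b : ℝ}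
    (hf : IntervalIntegrable f volume a b) :
    Tendsto (fun t : ℝ => ∫ x in a..b, f x * cos (t * x)) atTop (𝓝 0) := by
  simpa only [intervalIntegral, sub_zero] using
    (tendsto_setIntegral_mul_cos_atTop measurableSet_Ioc hf.1).sub
      (tendsto_setIntegral_mul_cos_atTop measurableSet_Ioc hf.2)

theorem one_sub_cos_two_mul_nat_mul (N : ℕ) (x : ℝ) :
    1 - cos (2 * N * x) = 2 * sin x * ∑ k ∈ Finset.range N, sin ((2 * k + 1) * x) := by
  induction N with
  | zero => simp
  | succ N ih =>
    have h := cos_sub_cos (2 * N * x) (2 * (N + 1) * x)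
    rw [show (2 * N * x + 2 * (N + 1) * x) / 2 = (2 * N + 1) * x by ring,
      show (2 * N * x - 2 * (N + 1) * x) / 2 = -x by ring, sin_neg] at h
    rw [Finset.sum_range_succ, mul_add, ← ih]
    push_cast
    linarith

theorem div_sin_eq_two_mul_sum_add_mul_cos (y x : ℝ) (N : ℕ) :
    y / sin x = 2 * ∑ k ∈ Finset.range N, y * sin ((2 * k + 1) * x)
      + y / sin x * cos (2 * N * x) := by
  -- if `sin x = 0` both sides vanish: `y / 0 = 0`, and `x ∈ πℤ` kills every `sin ((2k+1)x)`
  by_cases hx : sin x = 0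
  · obtain ⟨n, rfl⟩ := sin_eq_zero_iff.1 hx
    have hodd (k : ℕ) : sin ((2 * k + 1) * (n * π)) = 0 := by
      rw [← mul_assoc]
      exact_mod_cast sin_int_mul_pi ((2 * k + 1) * n)
    simp [hx, hodd]
  · have h : 2 * ∑ k ∈ Finset.range N, y * sin ((2 * k + 1) * x)
        = y / sin x * (1 - cos (2 * N * x)) := by
      rw [one_sub_cos_two_mul_nat_mul, ← Finset.mul_sum, div_mul_eq_mul_div, eq_div_iff hx]
      ring
    linear_combination -h

theorem tendsto_two_mul_sum_integral_mul_sin_odd_mul {f : ℝ → ℝ} {a b : ℝ}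
    (hf : IntervalIntegrable f volume a b)
    (hfs : IntervalIntegrable (fun x => f x / sin x) volume a b) :
    Tendsto (fun N : ℕ => 2 * ∑ k ∈ Finset.range N, ∫ x in a..b, f x * sin ((2 * k + 1) * x))
      atTop (𝓝 (∫ x in a..b, f x / sin x)) := by
  have hterm (k : ℕ) : IntervalIntegrable (fun x => f x * sin ((2 * k + 1) * x)) volume a b :=
    hf.mul_continuousOn (by fun_prop)
  have hsplit (N : ℕ) : ∫ x in a..b, f x / sin x
      = 2 * ∑ k ∈ Finset.range N, (∫ x in a..b, f x * sin ((2 * k + 1) * x))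
        + ∫ x in a..b, f x / sin x * cos (2 * N * x) := by
    conv_lhs => enter [1, x]; rw [div_sin_eq_two_mul_sum_add_mul_cos (f x) x N]
    rw [intervalIntegral.integral_add, intervalIntegral.integral_const_mul,
      intervalIntegral.integral_finsetSum fun k _ => hterm k]
    · simpa using (IntervalIntegrable.sum (Finset.range N) fun k _ => hterm k).const_mul 2
    · exact hfs.mul_continuousOn (by fun_prop)
  have hrem : Tendsto (fun N : ℕ => ∫ x in a..b, f x / sin x * cos (2 * N * x)) atTop (𝓝 0) :=
    (intervalIntegral.tendsto_integral_mul_cos_atTop hfs).comp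
      (tendsto_natCast_atTop_atTop.const_mul_atTop two_pos)
  rw [← sub_zero (∫ x in a..b, f x / sin x)]
  refine (tendsto_const_nhds.sub hrem).congr fun N => ?_
  rw [hsplit N, add_sub_cancel_right]

theorem sq_div_sin_le {x : ℝ} (h0 : 0 < x) (h1 : x ≤ π / 2) : x ^ 2 / sin x ≤ π / 2 * x := by
  have hsin : 2 / π * x ≤ sin x := mul_le_sin h0.le h1
  rw [div_le_iff₀ (lt_of_lt_of_le (by positivity) hsin)]
  calc x ^ 2 = π / 2 * x * (2 / π * x) := by field_simp
    _ ≤ π / 2 * x * sin x := by gcongr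

theorem intervalIntegrable_sq_div_sin :
    IntervalIntegrable (fun x => x ^ 2 / sin x) volume 0 (π / 2) := by
  rw [intervalIntegrable_iff_integrableOn_Ioc_of_le (by positivity)]
  refine Measure.integrableOn_of_bounded (M := π / 2 * (π / 2)) (by simp)
    (by fun_prop : Measurable fun x => x ^ 2 / sin x).aestronglyMeasurable ?_
  filter_upwards [ae_restrict_mem measurableSet_Ioc] with x ⟨h0, h1⟩
  rw [Real.norm_of_nonneg (div_nonneg (sq_nonneg x)
    (sin_nonneg_of_nonneg_of_le_pi h0.le (by linarith [pi_pos])))]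
  exact (sq_div_sin_le h0 h1).trans (by gcongr)

theorem hasDerivAt_sq_mul_sin_primitive {m : ℝ} (hm : m ≠ 0) (x : ℝ) :
    HasDerivAt (fun y => 2 * y * sin (m * y) / m ^ 2 + (2 / m ^ 3 - y ^ 2 / m) * cos (m * y))
      (x ^ 2 * sin (m * x)) x := by
  have hmx : HasDerivAt (fun y => m * y) m x := by simpa using (hasDerivAt_id x).const_mul m
  refine ((((hasDerivAt_id x).const_mul 2).mul hmx.sin).div_const (m ^ 2)).add
    ((((hasDerivAt_pow 2 x).div_const m).const_sub (2 / m ^ 3)).mul hmx.cos) |>.congr_deriv ?_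
  simp only [id, Nat.cast_ofNat]
  field_simp
  ring

theorem integral_sq_mul_sin_odd_mul (k : ℕ) :
    ∫ x in (0 : ℝ)..π / 2, x ^ 2 * sin ((2 * k + 1) * x)
      = π * (-1) ^ k / (2 * k + 1) ^ 2 - 2 / (2 * k + 1) ^ 3 := by
  have hodd : (2 * k + 1 : ℝ) * (π / 2) = π / 2 + k * π := by ring
  rw [intervalIntegral.integral_eq_sub_of_hasDerivAt
    (fun x _ => hasDerivAt_sq_mul_sin_primitive (by positivity) x)
    (Continuous.intervalIntegrable (by fun_prop) _ _)]
  simp only [hodd, sin_add_nat_mul_pi, cos_add_nat_mul_pi, sin_pi_div_two, cos_pi_div_two,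
    mul_zero, sin_zero, cos_zero]
  ring

theorem hasSum_one_div_two_mul_add_one_pow {p : ℕ} (hp : 1 < p) :
    HasSum (fun k : ℕ => 1 / (2 * (k : ℂ) + 1) ^ p) ((1 - 1 / 2 ^ p) * riemannZeta p) := by
  set f : ℕ → ℂ := fun n => 1 / (n : ℂ) ^ p
  have hsum : Summable f := by
    simpa only [Complex.cpow_natCast] using
      Complex.summable_one_div_nat_cpow.2 (by simpa using hp : 1 < (p : ℂ).re)
  have hζ : HasSum f (riemannZeta p) := by
    rw [zeta_nat_eq_tsum_of_gt_one hp]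
    exact hsum.hasSum
  have heven : HasSum (fun k => f (2 * k)) (1 / 2 ^ p * riemannZeta p) := by
    have hterm (k : ℕ) : f (2 * k) = 1 / 2 ^ p * f k := by
      simp only [f]
      push_cast
      rw [mul_pow, one_div_mul_one_div]
    exact (funext hterm) ▸ hζ.mul_left _
  obtain ⟨s, hodd⟩ : Summable fun k => f (2 * k + 1) :=
    hsum.comp_injective (i := fun k => 2 * k + 1) fun a b h => by simpa using h
  have htotal : 1 / 2 ^ p * riemannZeta p + s = riemannZeta p :=
    (heven.even_add_odd hodd).unique hζ
  rw [show (1 - 1 / 2 ^ p) * riemannZeta p = s by linear_combination -htotal]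
  simpa only [f, Nat.cast_add, Nat.cast_mul, Nat.cast_ofNat, Nat.cast_one] using hodd

theorem summable_neg_one_pow_div_two_mul_add_one_pow {p : ℕ} (hp : 1 < p) :
    Summable fun k : ℕ => (-1 : ℝ) ^ k / (2 * k + 1) ^ p := by
  have hodd : Summable fun k : ℕ => 1 / ((2 * k + 1 : ℕ) : ℝ) ^ p :=
    (Real.summable_one_div_nat_pow.2 hp).comp_injective (i := fun k => 2 * k + 1)
      fun a b h => by simpa using h
  refine Summable.of_norm_bounded hodd fun k => ?_
  simp [abs_of_pos (by positivity : (0 : ℝ) < 2 * k + 1)]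

theorem integral_x_sq_div_sin :
    ((∫ x in (0:ℝ)..(π/2), x^2 / Real.sin x : ℝ) : ℂ)
      = 2 * (π : ℂ) * ((∑' n : ℕ, (-1 : ℝ)^n / (2*(n:ℝ)+1)^2 : ℝ) : ℂ)
        - (7/2) * riemannZeta 3 := by
  have hlim := tendsto_two_mul_sum_integral_mul_sin_odd_mul
    (Continuous.intervalIntegrable (by fun_prop) _ _) intervalIntegrable_sq_div_sin
  simp only [integral_sq_mul_sin_odd_mul] at hlim
  have hcatalan := Complex.hasSum_ofReal.2
    (summable_neg_one_pow_div_two_mul_add_one_pow one_lt_two).hasSum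
  have hseries := (hcatalan.mul_left (2 * (π : ℂ))).sub
    ((hasSum_one_div_two_mul_add_one_pow (p := 3) (by norm_num)).mul_left 4)
  refine tendsto_nhds_unique ((Complex.continuous_ofReal.tendsto _).comp hlim) ?_
  convert hseries.tendsto_sum_nat using 2 with N
  · push_cast [Function.comp_apply, Finset.mul_sum]
    exact Finset.sum_congr rfl fun k _ => by ring
  · norm_num
    ring
end

section
/- For each natural number n ≥ 1, ζ(2n+1) = (−1)^{n+1} · (2π)^{2n+1}/(2n+1)! · ∫₀^{1/2} B_{2n+1}(x)·cot(πx) dx, where B_{2n+1} is the Bernoulli polynomial of degree 2n+1. -/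
/-!
Multiply the Fourier expansion `∑ₖ sin (2πkx) / k^(2n+1) = c · B_{2n+1}(x)` on `[0, 1]` by `cot (πx)`
and integrate over `(0, 1/2]`. Since `|sin (mθ)| ≤ m |sin θ|`, the `k`-th term is bounded by
`2 / k^(2n)`, so the series can be integrated termwise; and `sin (2kθ) cot θ` is a sum of cosines
(a Dirichlet kernel) whose integral over `(0, 1/2]` in `x = θ/π` is `1/2`. Hence
`c · ∫ B_{2n+1} cot = ζ(2n+1) / 2`.
-/

open Real Polynomial MeasureTheory intervalIntegral Set
open scoped Interval

namespace Real

theorem abs_sin_nat_mul_le (m : ℕ) (θ : ℝ) : |sin (m * θ)| ≤ m * |sin θ| := by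
  induction m with
  | zero => simp
  | succ m ih =>
    calc |sin ((m + 1 : ℕ) * θ)| = |sin (m * θ) * cos θ + cos (m * θ) * sin θ| := by
          push_cast; rw [add_mul, one_mul, sin_add]
      _ ≤ |sin (m * θ)| * |cos θ| + |cos (m * θ)| * |sin θ| := by
          rw [← abs_mul, ← abs_mul]; exact abs_add_le _ _
      _ ≤ m * |sin θ| * 1 + 1 * |sin θ| := by
          gcongr <;> first | exact ih | exact abs_cos_le_one _
      _ = (m + 1 : ℕ) * |sin θ| := by push_cast; ring

/-- Also true where `sin θ = 0`, since then `cos θ / sin θ = 0`. -/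
theorem abs_sin_nat_mul_mul_cot_le (m : ℕ) (θ : ℝ) : |sin (m * θ) * (cos θ / sin θ)| ≤ m := by
  rcases eq_or_ne (sin θ) 0 with h | h
  · simp [h]
  · calc |sin (m * θ) * (cos θ / sin θ)| = |sin (m * θ)| * (|cos θ| / |sin θ|) := by
          rw [abs_mul, abs_div]
      _ ≤ m * |sin θ| * (1 / |sin θ|) := by
          gcongr
          exacts [abs_sin_nat_mul_le m θ, abs_cos_le_one θ]
      _ = m := by field_simp

theorem sin_two_nat_mul_mul_cos (k : ℕ) (θ : ℝ) :
    sin (2 * k * θ) * cos θ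
      = sin θ * ∑ j ∈ Finset.range k, (cos (2 * j * θ) + cos (2 * (j + 1) * θ)) := by
  induction k with
  | zero => simp
  | succ k ih =>
    rw [Finset.sum_range_succ, mul_add, ← ih]
    push_cast
    have h : 2 * ((k : ℝ) + 1) * θ = 2 * k * θ + 2 * θ := by ring
    rw [h, sin_add, cos_add, sin_two_mul, cos_two_mul]
    linear_combination (2 * sin (2 * k * θ) * cos θ) * sin_sq_add_cos_sq θ

end Real

theorem integral_cos_two_nat_mul_pi_mul (j : ℕ) :
    ∫ x in (0 : ℝ)..1 / 2, cos (2 * j * (π * x)) = if j = 0 then 1 / 2 else 0 := by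
  rcases eq_or_ne j 0 with rfl | hj
  · simp
  · have hc : 2 * j * π ≠ 0 := by positivity
    have h := integral_comp_mul_left (a := 0) (b := 1 / 2) cos hc
    simp only [← mul_assoc, h, integral_cos, if_neg hj]
    rw [show 2 * j * π * (1 / 2) = j * π by ring, sin_nat_mul_pi]
    simp

theorem integral_sin_two_pi_nat_mul_mul_cot {k : ℕ} (hk : k ≠ 0) :
    ∫ x in (0 : ℝ)..1 / 2, sin (2 * π * k * x) * (cos (π * x) / sin (π * x)) = 1 / 2 := by
  have hcos_sum : ∀ x ∈ Ι (0 : ℝ) (1 / 2), sin (2 * π * k * x) * (cos (π * x) / sin (π * x))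
      = ∑ j ∈ Finset.range k, (cos (2 * j * (π * x)) + cos (2 * (j + 1) * (π * x))) := by
    intro x hx
    rw [uIoc_of_le (by norm_num)] at hx
    have hsin : sin (π * x) ≠ 0 :=
      (sin_pos_of_pos_of_lt_pi (by nlinarith [pi_pos, hx.1]) (by nlinarith [pi_pos, hx.2])).ne'
    rw [mul_div_assoc', div_eq_iff hsin, mul_comm _ (sin _), ← sin_two_nat_mul_mul_cos]
    ring_nf
  have hterm (j : ℕ) :
      ∫ x in (0 : ℝ)..1 / 2, (cos (2 * j * (π * x)) + cos (2 * (j + 1) * (π * x)))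
        = if j = 0 then 1 / 2 else 0 := by
    have hsucc := integral_cos_two_nat_mul_pi_mul (j + 1)
    push_cast at hsucc
    rw [intervalIntegral.integral_add (by apply Continuous.intervalIntegrable; fun_prop)
      (by apply Continuous.intervalIntegrable; fun_prop), integral_cos_two_nat_mul_pi_mul, hsucc]
    simp
  rw [integral_congr_ae (ae_of_all _ hcos_sum),
    integral_finsetSum fun j _ => Continuous.intervalIntegrable (by fun_prop) _ _]
  simp only [hterm, Finset.sum_ite_eq', Finset.mem_range, if_pos (Nat.pos_of_ne_zero hk)]

theorem hasSum_one_div_nat_pow_integral_bernoulli_mul_cot {n : ℕ} (hn : n ≠ 0) :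
    HasSum (fun k : ℕ => 1 / (k : ℝ) ^ (2 * n + 1))
      ((-1 : ℝ) ^ (n + 1) * (2 * π) ^ (2 * n + 1) / (2 * n + 1).factorial *
        ∫ x in (0 : ℝ)..1 / 2, aeval x (bernoulli (2 * n + 1)) * (cos (π * x) / sin (π * x))) := by
  set F : ℕ → ℝ → ℝ := fun k x =>
    1 / (k : ℝ) ^ (2 * n + 1) * (sin (2 * π * k * x) * (cos (π * x) / sin (π * x)))
  have hF_le (k : ℕ) (x : ℝ) : ‖F k x‖ ≤ 2 / (k : ℝ) ^ (2 * n) := by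
    rcases eq_or_ne k 0 with rfl | hk
    · simp [F, hn]
    have hcot := abs_sin_nat_mul_mul_cot_le (2 * k) (π * x)
    push_cast at hcot
    calc ‖F k x‖
        = 1 / (k : ℝ) ^ (2 * n + 1) * |sin (2 * k * (π * x)) * (cos (π * x) / sin (π * x))| := by
          rw [norm_mul, Real.norm_eq_abs, Real.norm_eq_abs, abs_of_nonneg (by positivity),
            show 2 * π * k * x = 2 * k * (π * x) by ring]
      _ ≤ 1 / (k : ℝ) ^ (2 * n + 1) * (2 * k) := by gcongr
      _ = 2 / (k : ℝ) ^ (2 * n) := by field_simp; ring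
  have hF_lim : ∀ x ∈ Ι (0 : ℝ) (1 / 2), HasSum (fun k => F k x)
      ((-1 : ℝ) ^ (n + 1) * (2 * π) ^ (2 * n + 1) / 2 / (2 * n + 1).factorial *
        (aeval x (bernoulli (2 * n + 1)) * (cos (π * x) / sin (π * x)))) := by
    intro x hx
    rw [uIoc_of_le (by norm_num)] at hx
    have h := (hasSum_one_div_nat_pow_mul_sin hn ⟨hx.1.le, by linarith [hx.2]⟩).mul_right
      (cos (π * x) / sin (π * x))
    simpa only [F, aeval_def, eval_map, mul_assoc] using h
  have hF_int (k : ℕ) : ∫ x in (0 : ℝ)..1 / 2, F k x = 1 / (k : ℝ) ^ (2 * n + 1) / 2 := by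
    rw [intervalIntegral.integral_const_mul]
    rcases eq_or_ne k 0 with rfl | hk
    · simp [hn]
    · rw [integral_sin_two_pi_nat_mul_mul_cot hk]; ring
  have h := hasSum_integral_of_dominated_convergence (μ := volume)
    (fun (k : ℕ) _ => 2 / (k : ℝ) ^ (2 * n))
    (fun k => by apply Measurable.aestronglyMeasurable; fun_prop)
    (fun k => ae_of_all _ fun x _ => hF_le k x)
    (ae_of_all _ fun _ _ => by simpa only [mul_one_div] using
      (summable_one_div_nat_pow.mpr (by omega)).mul_left 2)
    intervalIntegrable_const (ae_of_all _ hF_lim)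
  simp only [hF_int, intervalIntegral.integral_const_mul] at h
  rwa [← hasSum_div_const_iff two_ne_zero, mul_div_right_comm, div_right_comm _ _ (2 : ℝ)]

theorem zeta_odd_bernoulli_cot (n : ℕ) (hn : 1 ≤ n) :
    riemannZeta ((2*n+1 : ℕ) : ℂ)
      = (-1 : ℂ)^(n+1) * (2*(π : ℂ))^(2*n+1) / ((2*n+1).factorial : ℂ) *
        ((∫ x in (0:ℝ)..(1/2),
            (Polynomial.aeval x (Polynomial.bernoulli (2*n+1))) *
              (Real.cos (π*x) / Real.sin (π*x)) : ℝ) : ℂ) := by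
  have h := Complex.hasSum_ofReal.mpr
    (hasSum_one_div_nat_pow_integral_bernoulli_mul_cot (Nat.one_le_iff_ne_zero.mp hn))
  rw [zeta_nat_eq_tsum_of_gt_one (by omega)]
  push_cast at h ⊢
  exact h.tsum_eq
end

section
/- ∑_{n=1}^∞ ζ(2n)/(n(2n+1)·2^{2n}) = log π − 1. -/
/-!
Expanding `ζ(2n) = ∑ₘ m^{-2n}` and exchanging the (nonnegative) double sum, the series becomes
`∑ₘ F(1/(2m))` with `F(x) = ∑ₙ x^{2n}/(n(2n+1))`. Splitting `1/(n(2n+1)) = 1/n - 2/(2n+1)` gives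
`F` in closed form through `log(1-x²)` and `log((1+x)/(1-x))`, and at `x = 1/(2m)` the terms
telescope: `∑_{m ≤ K} F(1/(2m)) = 2 log(K!/(√(2K) (K/e)^K)) - (2K+1) log(1 + 1/(2K))`.
By Stirling's formula this tends to `2 log √π - 1`.
-/
open Real Filter Finset Function Topology
open scoped Nat

theorem hasSum_tsum_swap_of_nonneg {β γ : Type*} {f : β → γ → ℝ} (hf : ∀ b c, 0 ≤ f b c)
    {g : β → ℝ} {a : ℝ} (hg : ∀ b, HasSum (f b) (g b)) (ha : HasSum g a) :
    HasSum (fun c => ∑' b, f b c) a := by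
  have hs : Summable (uncurry f) :=
    (summable_prod_of_nonneg fun p => hf p.1 p.2).2
      ⟨fun b => (hg b).summable, by simpa only [(hg _).tsum_eq] using ha.summable⟩
  have hsum : HasSum (uncurry f) a := (hs.hasSum.prod_fiberwise hg).unique ha ▸ hs.hasSum
  have hswap : HasSum (fun p : γ × β => f p.2 p.1) a := (Equiv.prodComm γ β).hasSum_iff.2 hsum
  exact hswap.prod_fiberwise fun c =>
    (hswap.summable.comp_injective (Prod.mk_right_injective c)).hasSum

theorem hasSum_pow_two_mul_div {x : ℝ} (hx : |x| < 1) (hx0 : x ≠ 0) :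
    HasSum (fun n : ℕ => x ^ (2 * (n + 1)) / ((n + 1) * (2 * (n + 1) + 1)))
      (2 - log (1 - x ^ 2) - (log (1 + x) - log (1 - x)) / x) := by
  have hlog := hasSum_pow_div_log_of_abs_lt_one (x := x ^ 2) (by
    rw [abs_pow, sq_lt_one_iff₀ (abs_nonneg x)]; exact hx)
  have hatanh := (hasSum_nat_add_iff' 1).2 (hasSum_log_sub_log_of_abs_lt_one hx)
  have hvalue : 2 - log (1 - x ^ 2) - (log (1 + x) - log (1 - x)) / x
      = -log (1 - x ^ 2) - (log (1 + x) - log (1 - x) - 2 * x) / x := by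
    field_simp
    ring
  simp only [sum_range_one, Nat.cast_zero, mul_zero, zero_add, one_div, inv_one, mul_one,
    pow_one] at hatanh
  refine hvalue ▸ (hlog.sub (hatanh.div_const x)).congr_fun fun n => ?_
  push_cast
  field_simp
  ring

noncomputable def evenPowSeriesSum (y : ℝ) : ℝ :=
  2 + 2 * log y + (y - 1) * log (y - 1) - (y + 1) * log (y + 1)

theorem hasSum_inv_pow_two_mul_div {y : ℝ} (hy : 1 < y) :
    HasSum (fun n : ℕ => y⁻¹ ^ (2 * (n + 1)) / ((n + 1) * (2 * (n + 1) + 1)))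
      (evenPowSeriesSum y) := by
  have hy0 : 0 < y := by linarith
  have hy1 : 0 < y - 1 := by linarith
  have hinv : |y⁻¹| < 1 := by
    rw [abs_inv, abs_of_pos hy0]; exact inv_lt_one_of_one_lt₀ hy
  convert hasSum_pow_two_mul_div hinv (inv_ne_zero hy0.ne') using 1
  have h1 : 1 - y⁻¹ ^ 2 = (y - 1) * (y + 1) / y ^ 2 := by field_simp; ring
  have h2 : 1 + y⁻¹ = (y + 1) / y := by field_simp
  have h3 : 1 - y⁻¹ = (y - 1) / y := by field_simp
  rw [h1, h2, h3, log_div (by positivity) (by positivity), log_mul hy1.ne' (by positivity),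
    log_div (by positivity) hy0.ne', log_div hy1.ne' hy0.ne', log_pow, evenPowSeriesSum]
  field_simp
  push_cast
  ring

theorem sum_range_evenPowSeriesSum (K : ℕ) :
    ∑ k ∈ range K, evenPowSeriesSum (2 * (k + 1))
      = 2 * K * (1 + log 2) + 2 * log K ! - (2 * K + 1) * log (2 * K + 1) := by
  induction K with
  | zero => simp
  | succ K ih =>
    have hlog2 : log (2 * (K + 1)) = log 2 + log (K + 1) := log_mul two_ne_zero (by positivity)
    have hfac : log (K + 1)! = log (K + 1) + log K ! := by
      rw [Nat.factorial_succ, Nat.cast_mul, log_mul (by positivity) (by positivity)]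
      push_cast
      ring
    have hodd : 2 * ((K : ℝ) + 1) - 1 = 2 * K + 1 := by ring
    rw [sum_range_succ, ih, evenPowSeriesSum, hlog2, hfac, hodd]
    push_cast
    ring

theorem sum_range_evenPowSeriesSum_eq_log_stirlingSeq {K : ℕ} (hK : K ≠ 0) :
    ∑ k ∈ range K, evenPowSeriesSum (2 * (k + 1))
      = 2 * log (Stirling.stirlingSeq K) - (2 * K + 1) * log (1 + 1 / (2 * K)) := by
  have hK0 : (0 : ℝ) < K := by positivity
  have h1 : 1 + 1 / (2 * (K : ℝ)) = (2 * K + 1) / (2 * K) := by field_simp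
  rw [sum_range_evenPowSeriesSum, Stirling.log_stirlingSeq_formula, h1,
    log_div (by positivity) (by positivity), log_div (by positivity) (by positivity), log_exp,
    log_mul two_ne_zero hK0.ne']
  ring

theorem tendsto_add_one_mul_log_one_add_inv :
    Tendsto (fun t : ℝ => (t + 1) * log (1 + 1 / t)) atTop (𝓝 1) := by
  have hlog : Tendsto (fun t : ℝ => log (1 + 1 / t)) atTop (𝓝 0) := by
    have h : Tendsto (fun t : ℝ => 1 + 1 / t) atTop (𝓝 1) := by
      simpa only [add_zero, id] using
        (tendsto_const_nhds (x := (1 : ℝ)).div_atTop tendsto_id).const_add 1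
    simpa only [log_one, comp_def] using (continuousAt_log one_ne_zero).tendsto.comp h
  simpa only [add_mul, one_mul, add_zero] using
    (tendsto_mul_log_one_add_div_atTop 1).add hlog

theorem hasSum_evenPowSeriesSum_two_mul_succ :
    HasSum (fun k : ℕ => evenPowSeriesSum (2 * (k + 1))) (log π - 1) := by
  have hnonneg : ∀ k : ℕ, 0 ≤ evenPowSeriesSum (2 * (k + 1)) := fun k =>
    (hasSum_inv_pow_two_mul_div (by linarith [k.cast_nonneg (α := ℝ)])).nonneg fun n => by
      positivity
  rw [hasSum_iff_tendsto_nat_of_nonneg hnonneg]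
  have hstirling : Tendsto (fun K : ℕ => 2 * log (Stirling.stirlingSeq K)) atTop (𝓝 (log π)) := by
    have := ((continuousAt_log (sqrt_pos.2 pi_pos).ne').tendsto.comp
      Stirling.tendsto_stirlingSeq_sqrt_pi).const_mul 2
    rwa [log_sqrt pi_pos.le, mul_div_cancel₀ _ two_ne_zero] at this
  have hcorr : Tendsto (fun K : ℕ => (2 * (K : ℝ) + 1) * log (1 + 1 / (2 * K))) atTop (𝓝 1) :=
    tendsto_add_one_mul_log_one_add_inv.comp
      (tendsto_natCast_atTop_atTop.const_mul_atTop two_pos)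
  refine (hstirling.sub hcorr).congr' ?_
  filter_upwards [eventually_ne_atTop 0] with K hK
  exact (sum_range_evenPowSeriesSum_eq_log_stirlingSeq hK).symm

theorem riemannZeta_div_two_pow {s : ℕ} (hs : 1 < s) :
    riemannZeta s / 2 ^ s = ((∑' k : ℕ, (2 * ((k : ℝ) + 1))⁻¹ ^ s : ℝ) : ℂ) := by
  have hre : 1 < (s : ℂ).re := by simpa using hs
  rw [zeta_eq_tsum_one_div_nat_add_one_cpow hre, Complex.ofReal_tsum, ← tsum_div_const]
  refine tsum_congr fun k => ?_
  push_cast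
  rw [Complex.cpow_natCast, inv_pow, mul_pow, one_div, div_eq_mul_inv, ← mul_inv, mul_comm]

theorem zeta_even_sum_log_pi :
    ∑' n : ℕ, riemannZeta ((2*(n+1) : ℕ) : ℂ) / (((n:ℂ)+1) * (2*((n:ℂ)+1)+1) * 2^(2*(n+1)))
      = ((Real.log π : ℝ) : ℂ) - 1 := by
  have hcolumn : ∀ n : ℕ,
      riemannZeta ((2*(n+1) : ℕ) : ℂ) / (((n:ℂ)+1) * (2*((n:ℂ)+1)+1) * 2^(2*(n+1)))
        = ((∑' k : ℕ, (2 * ((k : ℝ) + 1))⁻¹ ^ (2 * (n + 1)) / ((n + 1) * (2 * (n + 1) + 1)) : ℝ)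
          : ℂ) := fun n => by
    rw [tsum_div_const, Complex.ofReal_div, ← riemannZeta_div_two_pow (by omega), div_div]
    push_cast
    ring
  have hdouble := hasSum_tsum_swap_of_nonneg
    (f := fun (k n : ℕ) => (2 * ((k : ℝ) + 1))⁻¹ ^ (2 * (n + 1)) / ((n + 1) * (2 * (n + 1) + 1)))
    (fun k n => by positivity)
    (fun k => hasSum_inv_pow_two_mul_div (by linarith [k.cast_nonneg (α := ℝ)]))
    hasSum_evenPowSeriesSum_two_mul_succ
  rw [tsum_congr hcolumn, ← Complex.ofReal_tsum, hdouble.tsum_eq, Complex.ofReal_sub,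
    Complex.ofReal_one]
end

section
/- (π/2)·log 2 = ∑_{n=0}^∞ C(2n, n) / ((2n+1)²·2^{2n}), where C(2n, n) is the central binomial coefficient. -/
/-!
With `γ k = C(2k, k) / 4^k`, the recurrence `(2k + 2) γ (k + 1) = (2k + 1) γ k` makes the
derivative of `cos θ * ∑_{k ≤ n} γ k sin^(2k) θ` collapse to `-(2n + 1) γ n sin^(2n+1) θ`.
Two mean value estimates then bound the remainder of the arcsine series
`θ = ∑ γ k sin^(2k+1) θ / (2k + 1)` by `(2n + 1) sin^(2n+1) θ * θ²`, which tends to `0` for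
`θ < π / 2`. Multiplying by `cot θ` and integrating term by term over `[0, π / 2]`, using
`∫ sin^(2k) θ cos θ dθ = 1 / (2k + 1)`, turns the series of the theorem into `∫ θ cot θ dθ`,
and integration by parts identifies this with `-∫ log (sin θ) dθ = (π / 2) log 2`.
-/

open Real Filter Topology Set MeasureTheory

theorem sub_mem_Icc_of_hasDerivAt {f f' : ℝ → ℝ} {a b m M : ℝ} (hab : a ≤ b)
    (hf : ∀ x ∈ Icc a b, HasDerivAt f (f' x) x) (hf' : ∀ x ∈ Ioo a b, f' x ∈ Icc m M) :
    f b - f a ∈ Icc (m * (b - a)) (M * (b - a)) := by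
  have hcont : ContinuousOn f (Icc a b) := fun x hx => (hf x hx).continuousAt.continuousWithinAt
  have hdiff : DifferentiableOn ℝ f (interior (Icc a b)) := by
    rw [interior_Icc]
    exact fun x hx => (hf x (Ioo_subset_Icc_self hx)).differentiableAt.differentiableWithinAt
  have hderiv : ∀ x ∈ interior (Icc a b), deriv f x ∈ Icc m M := by
    rw [interior_Icc]
    intro x hx
    rw [(hf x (Ioo_subset_Icc_self hx)).deriv]
    exact hf' x hx
  have ha := left_mem_Icc.2 hab
  have hb := right_mem_Icc.2 hab
  exact ⟨(convex_Icc a b).mul_sub_le_image_sub_of_le_deriv hcont hdiff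
      (fun x hx => (hderiv x hx).1) a ha b hb hab,
    (convex_Icc a b).image_sub_le_mul_sub_of_deriv_le hcont hdiff
      (fun x hx => (hderiv x hx).2) a ha b hb hab⟩

noncomputable def centralBinomDivFourPow (n : ℕ) : ℝ := n.centralBinom / 4 ^ n

local notation "γ" => centralBinomDivFourPow

theorem centralBinomDivFourPow_nonneg (n : ℕ) : 0 ≤ γ n := by
  unfold centralBinomDivFourPow; positivity

theorem centralBinomDivFourPow_le_one (n : ℕ) : γ n ≤ 1 := by
  rw [centralBinomDivFourPow, div_le_one (by positivity)]
  exact_mod_cast Nat.centralBinom_le_four_pow n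

@[simp]
theorem centralBinomDivFourPow_zero : γ 0 = 1 := by simp [centralBinomDivFourPow]

theorem centralBinomDivFourPow_succ (n : ℕ) : (2 * n + 2) * γ (n + 1) = (2 * n + 1) * γ n := by
  have h : ((n + 1 : ℕ) : ℝ) * (n + 1).centralBinom = 2 * (2 * n + 1) * n.centralBinom := by
    exact_mod_cast Nat.succ_mul_centralBinom_succ n
  rw [centralBinomDivFourPow, centralBinomDivFourPow, pow_succ]
  push_cast at h
  field_simp
  linear_combination 2 * h

noncomputable def invSqrtPartialSum (n : ℕ) (x : ℝ) : ℝ := ∑ k ∈ Finset.range n, γ k * x ^ (2 * k)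

noncomputable def arcsinPartialSum (n : ℕ) (x : ℝ) : ℝ :=
  ∑ k ∈ Finset.range n, γ k * x ^ (2 * k + 1) / (2 * k + 1)

theorem invSqrtPartialSum_succ_zero (n : ℕ) : invSqrtPartialSum (n + 1) 0 = 1 := by
  simp [invSqrtPartialSum, Finset.sum_range_succ']

theorem hasDerivAt_arcsinPartialSum (n : ℕ) (x : ℝ) :
    HasDerivAt (arcsinPartialSum n) (invSqrtPartialSum n x) x := by
  unfold arcsinPartialSum invSqrtPartialSum
  refine HasDerivAt.fun_sum fun k _ => ?_
  refine (((hasDerivAt_pow (2 * k + 1) x).const_mul (γ k)).div_const (2 * k + 1)).congr_deriv ?_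
  rw [Nat.add_sub_cancel]
  push_cast
  field_simp

theorem hasDerivAt_cos_mul_invSqrtPartialSum_sin (n : ℕ) (θ : ℝ) :
    HasDerivAt (fun θ => cos θ * invSqrtPartialSum (n + 1) (sin θ))
      (-((2 * n + 1) * γ n * sin θ ^ (2 * n + 1))) θ := by
  induction n with
  | zero => simpa [invSqrtPartialSum] using hasDerivAt_cos θ
  | succ n ih =>
    have hterm := ((hasDerivAt_cos θ).fun_mul ((hasDerivAt_sin θ).fun_pow (2 * (n + 1)))).const_mul
      (γ (n + 1))
    have hsplit : (fun θ => cos θ * invSqrtPartialSum (n + 1 + 1) (sin θ)) = fun θ =>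
        cos θ * invSqrtPartialSum (n + 1) (sin θ)
          + γ (n + 1) * (cos θ * sin θ ^ (2 * (n + 1))) := by
      ext θ
      rw [invSqrtPartialSum, invSqrtPartialSum, Finset.sum_range_succ]
      ring
    rw [hsplit]
    refine (ih.add hterm).congr_deriv ?_
    rw [show 2 * (n + 1) - 1 = 2 * n + 1 by omega]
    push_cast
    linear_combination sin θ ^ (2 * n + 1) * centralBinomDivFourPow_succ n
      + (2 * n + 2) * γ (n + 1) * sin θ ^ (2 * n + 1) * cos_sq' θ

theorem one_sub_cos_mul_invSqrtPartialSum_sin_mem_Icc (n : ℕ) {u θ : ℝ} (hu : 0 ≤ u)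
    (huθ : u ≤ θ) (hθ : θ ≤ π / 2) :
    1 - cos u * invSqrtPartialSum (n + 1) (sin u)
      ∈ Icc 0 ((2 * n + 1) * sin θ ^ (2 * n + 1) * u) := by
  have h := sub_mem_Icc_of_hasDerivAt (f := fun u => 1 - cos u * invSqrtPartialSum (n + 1) (sin u))
    (m := 0) (M := (2 * n + 1) * sin θ ^ (2 * n + 1)) hu
    (fun x _ => by simpa using (hasDerivAt_cos_mul_invSqrtPartialSum_sin n x).const_sub 1)
    (fun x hx => by
      have hsin : 0 ≤ sin x := sin_nonneg_of_nonneg_of_le_pi hx.1.le (by linarith [pi_pos, hx.2])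
      have hmono : sin x ≤ sin θ :=
        sin_le_sin_of_le_of_le_pi_div_two (by linarith [pi_pos, hx.1]) hθ (hx.2.le.trans huθ)
      refine ⟨by have := centralBinomDivFourPow_nonneg n; positivity, ?_⟩
      calc (2 * n + 1) * γ n * sin x ^ (2 * n + 1) ≤ (2 * n + 1) * 1 * sin θ ^ (2 * n + 1) := by
            gcongr
            exact centralBinomDivFourPow_le_one n
        _ = (2 * n + 1) * sin θ ^ (2 * n + 1) := by ring)
  simpa [invSqrtPartialSum_succ_zero] using h

theorem sub_arcsinPartialSum_sin_mem_Icc (n : ℕ) {θ : ℝ} (hθ₀ : 0 ≤ θ) (hθ : θ ≤ π / 2) :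
    θ - arcsinPartialSum (n + 1) (sin θ) ∈ Icc 0 ((2 * n + 1) * sin θ ^ (2 * n + 1) * θ ^ 2) := by
  have h := sub_mem_Icc_of_hasDerivAt (f := fun u => u - arcsinPartialSum (n + 1) (sin u))
    (m := 0) (M := (2 * n + 1) * sin θ ^ (2 * n + 1) * θ) hθ₀
    (fun x _ => ((hasDerivAt_id x).sub ((hasDerivAt_arcsinPartialSum (n + 1) (sin x)).comp x
      (hasDerivAt_sin x))).congr_deriv (by rw [mul_comm]))
    (fun x hx => by
      have h := one_sub_cos_mul_invSqrtPartialSum_sin_mem_Icc n hx.1.le hx.2.le hθ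
      have hsin : 0 ≤ sin θ := sin_nonneg_of_nonneg_of_le_pi hθ₀ (by linarith [pi_pos])
      exact ⟨h.1, h.2.trans (mul_le_mul_of_nonneg_left hx.2.le (by positivity))⟩)
  simpa [arcsinPartialSum, pow_two, mul_assoc] using h

theorem hasSum_arcsin_of_nonneg {x : ℝ} (hx₀ : 0 ≤ x) (hx₁ : x < 1) :
    HasSum (fun k : ℕ => γ k * x ^ (2 * k + 1) / (2 * k + 1)) (arcsin x) := by
  set θ := arcsin x
  have hθ₀ : 0 ≤ θ := arcsin_nonneg.2 hx₀
  have hθ : θ < π / 2 := arcsin_lt_pi_div_two.2 hx₁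
  have hsin : sin θ = x := sin_arcsin (by linarith) hx₁.le
  rw [hasSum_iff_tendsto_nat_of_nonneg fun k => by
    have := centralBinomDivFourPow_nonneg k; positivity, ← tendsto_add_atTop_iff_nat 1]
  have hbound : Tendsto (fun n : ℕ => θ - (2 * n + 1) * x ^ (2 * n + 1) * θ ^ 2) atTop (𝓝 θ) := by
    have hodd : Tendsto (fun n : ℕ => 2 * n + 1) atTop atTop :=
      tendsto_atTop_atTop.2 fun b => ⟨b, fun n hn => by omega⟩
    have := ((tendsto_self_mul_const_pow_of_lt_one hx₀ hx₁).comp hodd).mul_const (θ ^ 2)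
    simpa using tendsto_const_nhds.sub this
  refine tendsto_of_tendsto_of_tendsto_of_le_of_le hbound tendsto_const_nhds
    (fun n => ?_) fun n => ?_
  all_goals
    have h := sub_arcsinPartialSum_sin_mem_Icc n hθ₀ hθ.le
    simp only [hsin, arcsinPartialSum, mem_Icc] at h
    dsimp only
    linarith [h.1, h.2]

theorem hasSum_arcsin {x : ℝ} (hx : |x| < 1) :
    HasSum (fun k : ℕ => γ k * x ^ (2 * k + 1) / (2 * k + 1)) (arcsin x) := by
  rcases le_total 0 x with hx₀ | hx₀
  · exact hasSum_arcsin_of_nonneg hx₀ (abs_lt.1 hx).2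
  · have h := (hasSum_arcsin_of_nonneg (neg_nonneg.2 hx₀) (by linarith [(abs_lt.1 hx).1])).neg
    rw [arcsin_neg, neg_neg] at h
    simpa [(odd_two_mul_add_one _).neg_pow, neg_div] using h

theorem sinc_pos {x : ℝ} (hx₀ : 0 ≤ x) (hx : x < π) : 0 < sinc x := by
  rcases hx₀.eq_or_lt with rfl | hx₀
  · simp [sinc_zero]
  · rw [sinc_of_ne_zero hx₀.ne']
    exact div_pos (sin_pos_of_pos_of_lt_pi hx₀ hx) hx₀

/- `θ cot θ` is written as `cos θ / sinc θ`, which is continuous on `[0, π)`. -/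
theorem continuousOn_cos_div_sinc : ContinuousOn (fun θ => cos θ / sinc θ) (Ico 0 π) :=
  continuous_cos.continuousOn.div continuous_sinc.continuousOn fun _ hθ => (sinc_pos hθ.1 hθ.2).ne'

theorem intervalIntegrable_cos_div_sinc :
    IntervalIntegrable (fun θ => cos θ / sinc θ) volume 0 (π / 2) :=
  (continuousOn_cos_div_sinc.mono <| by
    rw [uIcc_of_le pi_div_two_pos.le]
    exact Icc_subset_Ico_right (by linarith [pi_pos])).intervalIntegrable

/- Writing `θ * log (sin θ) = θ * log θ + θ * log (sinc θ)` removes the singularity at `0`. -/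
theorem continuousOn_mul_log_sin : ContinuousOn (fun θ => θ * log (sin θ)) (Ico 0 π) := by
  have h : ContinuousOn (fun θ => θ * log θ + θ * log (sinc θ)) (Ico 0 π) :=
    continuous_mul_log.continuousOn.add (continuousOn_id.mul
      (continuous_sinc.continuousOn.log fun _ hθ => (sinc_pos hθ.1 hθ.2).ne'))
  refine h.congr fun θ hθ => ?_
  rcases hθ.1.eq_or_lt with rfl | hθ₀
  · simp
  · dsimp only
    rw [← mul_add, ← log_mul hθ₀.ne' (sinc_pos hθ.1 hθ.2).ne', sinc_of_ne_zero hθ₀.ne',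
      mul_div_cancel₀ _ hθ₀.ne']

theorem hasDerivAt_mul_log_sin {θ : ℝ} (hθ : θ ≠ 0) (hsin : sin θ ≠ 0) :
    HasDerivAt (fun θ => θ * log (sin θ)) (log (sin θ) + cos θ / sinc θ) θ :=
  ((hasDerivAt_id θ).mul ((hasDerivAt_sin θ).log hsin)).congr_deriv <| by
    rw [sinc_of_ne_zero hθ, id]
    field_simp

theorem integral_cos_div_sinc : ∫ θ in 0..π / 2, cos θ / sinc θ = π / 2 * log 2 := by
  have hlog : IntervalIntegrable (fun θ => log (sin θ)) volume 0 (π / 2) :=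
    intervalIntegrable_log_sin
  have hftc := intervalIntegral.integral_eq_sub_of_hasDerivAt_of_le pi_div_two_pos.le
    (continuousOn_mul_log_sin.mono (Icc_subset_Ico_right (by linarith [pi_pos])))
    (fun θ hθ => hasDerivAt_mul_log_sin hθ.1.ne'
      (sin_pos_of_pos_of_lt_pi hθ.1 (by linarith [hθ.2, pi_pos])).ne')
    (hlog.add intervalIntegrable_cos_div_sinc)
  rw [intervalIntegral.integral_add hlog intervalIntegrable_cos_div_sinc] at hftc
  simp only [sin_pi_div_two, log_one, mul_zero, zero_mul, sub_zero] at hftc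
  linarith [integral_log_sin_zero_pi_div_two]

theorem integral_sin_pow_mul_cos_zero_pi_div_two (m : ℕ) :
    ∫ θ in 0..π / 2, sin θ ^ m * cos θ = 1 / (m + 1) := by
  simpa using integral_sin_pow_mul_cos_pow_odd (a := 0) (b := π / 2) m 0

theorem hasSum_sin_pow_mul_cos {θ : ℝ} (hθ : θ ∈ Ioc 0 (π / 2)) :
    HasSum (fun k : ℕ => γ k / (2 * k + 1) * (sin θ ^ (2 * k) * cos θ)) (cos θ / sinc θ) := by
  rcases hθ.2.lt_or_eq with hθ' | rfl
  · have hsin : 0 < sin θ := sin_pos_of_pos_of_lt_pi hθ.1 (by linarith [pi_pos])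
    have hsin₁ : |sin θ| < 1 := by
      rw [abs_of_pos hsin, ← sin_pi_div_two]
      exact sin_lt_sin_of_lt_of_le_pi_div_two (by linarith [pi_pos, hθ.1]) le_rfl hθ'
    have h := (hasSum_arcsin hsin₁).mul_left (cos θ / sin θ)
    rw [arcsin_sin (by linarith [pi_pos, hθ.1]) hθ.2] at h
    have hsum : cos θ / sinc θ = cos θ / sin θ * θ := by
      rw [sinc_of_ne_zero hθ.1.ne']
      field_simp
    have hterm : ∀ k : ℕ, γ k / (2 * k + 1) * (sin θ ^ (2 * k) * cos θ)
        = cos θ / sin θ * (γ k * sin θ ^ (2 * k + 1) / (2 * k + 1)) := by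
      intro k
      field_simp
      ring
    simpa only [hsum, hterm] using h
  · simp

theorem hasSum_centralBinomDivFourPow_div_sq :
    HasSum (fun k : ℕ => γ k / (2 * k + 1) ^ 2) (∫ θ in 0..π / 2, cos θ / sinc θ) := by
  set F : ℕ → ℝ → ℝ := fun k θ => γ k / (2 * k + 1) * (sin θ ^ (2 * k) * cos θ)
  have hIoc : uIoc 0 (π / 2) = Ioc 0 (π / 2) := uIoc_of_le pi_div_two_pos.le
  have hnonneg : ∀ k, ∀ θ ∈ Ioc 0 (π / 2), 0 ≤ F k θ := fun k θ hθ => by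
    have := centralBinomDivFourPow_nonneg k
    have := sin_nonneg_of_nonneg_of_le_pi hθ.1.le (by linarith [pi_pos, hθ.2])
    have := cos_nonneg_of_mem_Icc ⟨by linarith [pi_pos, hθ.1], hθ.2⟩
    positivity
  have h := intervalIntegral.hasSum_integral_of_dominated_convergence F
    (fun k => (by fun_prop : Continuous (F k)).aestronglyMeasurable)
    (fun k => .of_forall fun θ hθ => (Real.norm_of_nonneg (hnonneg k θ (hIoc ▸ hθ))).le)
    (.of_forall fun θ hθ => (hasSum_sin_pow_mul_cos (hIoc ▸ hθ)).summable)
    (intervalIntegrable_cos_div_sinc.congr fun θ hθ =>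
      ((hasSum_sin_pow_mul_cos (hIoc ▸ hθ)).tsum_eq).symm)
    (.of_forall fun θ hθ => hasSum_sin_pow_mul_cos (hIoc ▸ hθ))
  have hterm : ∀ k : ℕ, ∫ θ in 0..π / 2, F k θ = γ k / (2 * k + 1) ^ 2 := fun k => by
    simp only [F, intervalIntegral.integral_const_mul, integral_sin_pow_mul_cos_zero_pi_div_two]
    push_cast
    field_simp
  simpa only [hterm] using h

theorem pi_log_two_central_binomial :
    (π/2) * Real.log 2
      = ∑' n : ℕ, (Nat.choose (2*n) n : ℝ) / ((2*(n:ℝ)+1)^2 * 2^(2*n)) := by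
  have hterm : ∀ n : ℕ, (Nat.choose (2 * n) n : ℝ) / ((2 * (n : ℝ) + 1) ^ 2 * 2 ^ (2 * n))
      = γ n / (2 * n + 1) ^ 2 := fun n => by
    rw [centralBinomDivFourPow, Nat.centralBinom_eq_two_mul_choose, pow_mul]
    field_simp
    norm_num
  rw [tsum_congr hterm, hasSum_centralBinomDivFourPow_div_sq.tsum_eq, integral_cos_div_sinc]
end
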